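/- arXiv:1510.02021 — 2 statements merged into one kernel-verified Lean document; each statement's English description precedes it below -/
import Mathlib

section
/- Let q be a prime power, let d be a positive divisor of q−1, let r be a positive integer, and let φ be a polynomial with coefficients in the subfield F_q of F_{q²}. Let c, u ∈ F_q and e ∈ F_{q²} with e + e^q = 0. Then f(x) = (x^q + x + c)^r · φ((x^q + x + c)^{(q²−1)/d}) + u·x^q + (u − e)·x is a permutation polynomial of F_{q²} if and only if e ≠ 0. -/
/-!
Write `T x = x ^ q + x`. Then `f x = h (T x) - e x` with
`h t = (t + c) ^ r φ((t + c) ^ s) + u t`, and `h` maps `𝔽_q` into `𝔽_q` because `φ`, `c` and `u`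
are defined over `𝔽_q`. If `e = 0`, `f` factors through `T`, which maps the `q²` elements of
`𝔽_{q²}` into the `q` elements of `𝔽_q`. If `e ≠ 0` and `f a = f b`, applying Frobenius and using
`e ^ q = -e` gives `e (T a - T b) = 0`, hence `T a = T b`, and then `e a = e b`.
-/

open Polynomial
open scoped Finset

theorem Polynomial.map_eval_of_forall_map_coeff {R : Type*} [CommSemiring R] (σ : R →+* R)
    (φ : R[X]) (hφ : ∀ i, σ (φ.coeff i) = φ.coeff i) (y : R) :
    σ (φ.eval y) = φ.eval (σ y) := by
  have hmap : φ.map σ = φ := Polynomial.ext fun i => by rw [coeff_map, hφ]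
  rw [← eval₂_at_apply, ← eval_map, hmap]

theorem injective_comp_add_self_sub_mul {R : Type*} [CommRing R] [IsDomain R] (σ : R →+* R)
    (h : R → R) (hh : ∀ x, σ (h (σ x + x)) = h (σ x + x)) {e : R} (he : σ e = -e)
    (he0 : e ≠ 0) : Function.Injective fun x => h (σ x + x) - e * x := by
  intro a b hab
  simp only at hab
  have hσab : h (σ a + a) + e * σ a = h (σ b + b) + e * σ b := by
    simpa [he, hh] using congrArg σ hab
  have htrace : σ a + a = σ b + b :=
    mul_left_cancel₀ he0 (by linear_combination hσab - hab)
  rw [htrace] at hab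
  exact mul_left_cancel₀ he0 (by linear_combination -hab)

theorem card_filter_pow_eq_self_le {R : Type*} [Field R] [Fintype R] [DecidableEq R] {q : ℕ}
    (hq : 1 < q) : #{x : R | x ^ q = x} ≤ q := by
  have hne : (X ^ q - X : R[X]) ≠ 0 := FiniteField.X_pow_card_sub_X_ne_zero R hq
  calc #{x : R | x ^ q = x} ≤ (X ^ q - X : R[X]).natDegree := by
        refine card_le_degree_of_subset_roots fun x hx => ?_
        rw [Finset.mem_val, Finset.mem_filter] at hx
        rw [mem_roots hne, IsRoot.def, eval_sub, eval_pow, eval_X, hx.2, sub_self]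
    _ = q := FiniteField.X_pow_card_sub_X_natDegree_eq R hq

theorem exists_ringHom_apply_eq_pow {F : Type*} [Field F] [Fintype F] {q n : ℕ}
    (hq : IsPrimePow q) (hF : Fintype.card F = q ^ n) : ∃ σ : F →+* F, ∀ x, σ x = x ^ q := by
  obtain ⟨p, k, hp, -, rfl⟩ := hq
  have : Fact p.Prime := ⟨hp.nat_prime⟩
  have : CharP F p := charP_of_card_eq_prime_pow (f := k * n) (by rw [hF, pow_mul])
  exact ⟨iterateFrobenius F p k, fun x => iterateFrobenius_def p k x⟩

theorem pow_pow_eq_self_of_card_eq_sq {F : Type*} [Field F] [Fintype F] {q : ℕ}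
    (hF : Fintype.card F = q ^ 2) (x : F) : (x ^ q) ^ q = x := by
  rw [← pow_mul, ← sq, ← hF, FiniteField.pow_card]

theorem not_injective_frobenius_add_self {F : Type*} [Field F] [Fintype F] {q : ℕ}
    (hq : 1 < q) (hF : Fintype.card F = q ^ 2) (σ : F →+* F) (hσ : ∀ x, σ x = x ^ q) :
    ¬ Function.Injective fun x => σ x + x := by
  classical
  intro hinj
  have hσσ : ∀ x, σ (σ x) = x := fun x => by rw [hσ, hσ, pow_pow_eq_self_of_card_eq_sq hF]
  have hcard : Fintype.card F ≤ q := by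
    refine le_trans (Finset.card_le_card_of_injOn (t := {x : F | x ^ q = x}) _
      (fun x _ => ?_) hinj.injOn)
      (card_filter_pow_eq_self_le (R := F) hq)
    simp [← hσ, hσσ, add_comm]
  rw [hF] at hcard
  nlinarith

theorem stmt_18_general {F : Type*} [Field F] [Fintype F]
    (q : ℕ) (hq : IsPrimePow q) (hF : Fintype.card F = q ^ 2)
    (d : ℕ)
    (r : ℕ)
    (φ : Polynomial F) (hφ : ∀ i : ℕ, (φ.coeff i) ^ q = φ.coeff i)
    (c u e : F) (hc : c ^ q = c) (hu : u ^ q = u) (he : e + e ^ q = 0)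
    (f : F → F)
    (hf : f = fun x => (x ^ q + x + c) ^ r *
      φ.eval ((x ^ q + x + c) ^ ((q ^ 2 - 1) / d)) + u * x ^ q + (u - e) * x) :
    Function.Bijective f ↔ e ≠ 0 := by
  obtain ⟨σ, hσ⟩ := exists_ringHom_apply_eq_pow hq hF
  have hσσ : ∀ x, σ (σ x) = x := fun x => by rw [hσ, hσ, pow_pow_eq_self_of_card_eq_sq hF]
  set h : F → F := fun t => (t + c) ^ r * φ.eval ((t + c) ^ ((q ^ 2 - 1) / d)) + u * t
  have hfh : f = fun x => h (σ x + x) - e * x := by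
    subst hf; funext x; simp only [h, hσ]; ring
  have hh : ∀ x, σ (h (σ x + x)) = h (σ x + x) := fun x => by
    have hσc : σ c = c := (hσ c).trans hc
    have hσu : σ u = u := (hσ u).trans hu
    simp only [h, map_add, map_mul, map_pow, hσσ, hσc, hσu,
      φ.map_eval_of_forall_map_coeff σ (fun i => (hσ _).trans (hφ i)), add_comm x]
  rw [← Finite.injective_iff_bijective]
  constructor
  · rintro hinj rfl
    have hcomp : f = h ∘ fun x => σ x + x := by simp [hfh, Function.comp_def]
    exact not_injective_frobenius_add_self hq.one_lt hF σ hσ (hcomp ▸ hinj).of_comp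
  · intro he0
    rw [hfh]
    exact injective_comp_add_self_sub_mul σ h hh (by rw [hσ]; linear_combination he) he0

theorem stmt_18 {F : Type*} [Field F] [Fintype F]
    (q : ℕ) (hq : IsPrimePow q) (hF : Fintype.card F = q ^ 2)
    (d : ℕ) (hd0 : 0 < d) (hdvd : d ∣ q - 1)
    (r : ℕ) (hr : 0 < r)
    (φ : Polynomial F) (hφ : ∀ i : ℕ, (φ.coeff i) ^ q = φ.coeff i)
    (c u e : F) (hc : c ^ q = c) (hu : u ^ q = u) (he : e + e ^ q = 0)
    (f : F → F)
    (hf : f = fun x => (x ^ q + x + c) ^ r *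
      φ.eval ((x ^ q + x + c) ^ ((q ^ 2 - 1) / d)) + u * x ^ q + (u - e) * x) :
    Function.Bijective f ↔ e ≠ 0 :=
  stmt_18_general q hq hF d r φ hφ c u e hc hu he f hf
end

section
/- Let q be a prime power, let d be a positive divisor of q−1, let r be an even positive integer, and let φ be a polynomial with coefficients in the subfield F_q of F_{q²}. Let u, e ∈ F_q and c ∈ F_{q²} with c + c^q = 0. Then f(x) = (x^q − x + c)^r · φ((x^q − x + c)^{(q²−1)/d}) + u·x^q + (u + e)·x is a permutation polynomial of F_{q²} if and only if e·(2u + e) ≠ 0. -/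
/-!
Write `σ x = x ^ q`, an involutive automorphism of `𝔽_{q²}` with fixed field `𝔽_q`. Since
`σ c = -c`, the element `ψ x = σ x - x + c` satisfies `σ (ψ x) = -ψ x`; as `r` is even and
`(q² - 1) / d` is a multiple of `q + 1`, the term `T x = ψ x ^ r * φ (ψ x ^ ((q² - 1) / d))` is
fixed by `σ`. Hence `f - σ ∘ f = e • (id - σ)`, so `f x = f y` forces `ψ x = ψ y`, then
`T x = T y`, and finally `(2u + e) (x - y) = 0`. Conversely, if `e = 0` then `f` takes values in
`𝔽_q`, and if `2u + e = 0` then `f 1 = f 0`.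
-/

open Polynomial

section Involution

variable {F : Type*} [Field F] {σ : F →+* F} {g : F → F} {u e : F}

theorem map_add_mul_add_mul (hσ : Function.Involutive σ)
    (hg : ∀ x, σ (g (σ x - x)) = g (σ x - x)) (hu : σ u = u) (he : σ e = e) (x : F) :
    σ (g (σ x - x) + u * σ x + (u + e) * x) = g (σ x - x) + u * x + (u + e) * σ x := by
  simp only [map_add, map_mul, hg, hu, he, hσ x]

theorem injective_add_mul_add_mul (hσ : Function.Involutive σ)
    (hg : ∀ x, σ (g (σ x - x)) = g (σ x - x)) (hu : σ u = u) (he : σ e = e)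
    (he₀ : e ≠ 0) (hue : 2 * u + e ≠ 0) :
    Function.Injective fun x => g (σ x - x) + u * σ x + (u + e) * x := by
  intro x y hxy
  dsimp only at hxy
  have hσxy := congrArg σ hxy
  simp only [map_add_mul_add_mul hσ hg hu he] at hσxy
  have hdiff : σ x - x = σ y - y := mul_left_cancel₀ he₀ (by linear_combination hσxy - hxy)
  simp only [hdiff] at hxy
  have : (2 * u + e) * (x - y) = 0 := by linear_combination hxy - u * hdiff
  exact sub_eq_zero.mp ((mul_eq_zero.mp this).resolve_left hue)

theorem not_surjective_add_mul_add_mul (hσ : Function.Involutive σ) (hσ_ne : ∃ z, σ z ≠ z)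
    (hg : ∀ x, σ (g (σ x - x)) = g (σ x - x)) (hu : σ u = u) :
    ¬ Function.Surjective fun x => g (σ x - x) + u * σ x + u * x := by
  intro hsurj
  obtain ⟨z, hz⟩ := hσ_ne
  obtain ⟨x, rfl⟩ := hsurj z
  have hfix := map_add_mul_add_mul hσ hg hu (map_zero σ) x
  simp only [add_zero] at hfix
  apply hz
  dsimp only
  rw [hfix]
  ring

theorem bijective_add_mul_add_mul_iff [Finite F] (hσ : Function.Involutive σ)
    (hσ_ne : ∃ z, σ z ≠ z) (hg : ∀ x, σ (g (σ x - x)) = g (σ x - x)) (hu : σ u = u)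
    (he : σ e = e) :
    Function.Bijective (fun x => g (σ x - x) + u * σ x + (u + e) * x) ↔
      e * (2 * u + e) ≠ 0 := by
  refine ⟨fun hbij h => ?_, fun h => ?_⟩
  · rcases mul_eq_zero.mp h with rfl | hue
    · simp only [add_zero] at hbij
      exact not_surjective_add_mul_add_mul hσ hσ_ne hg hu hbij.surjective
    · have : g (σ 1 - 1) + u * σ 1 + (u + e) * 1 = g (σ 0 - 0) + u * σ 0 + (u + e) * 0 := by
        simp only [map_one, map_zero, sub_self]
        linear_combination hue
      exact one_ne_zero (hbij.injective this)
  · rw [← Finite.injective_iff_bijective]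
    exact injective_add_mul_add_mul hσ hg hu he (left_ne_zero_of_mul h) (right_ne_zero_of_mul h)

end Involution

theorem exists_ringHom_eq_pow_of_card_eq_pow {F : Type*} [Field F] [Fintype F] {q k : ℕ}
    (hq : IsPrimePow q) (hF : Fintype.card F = q ^ k) :
    ∃ σ : F →+* F, ∀ x, σ x = x ^ q := by
  obtain ⟨p, n, hp, -, rfl⟩ := hq
  have : Fact p.Prime := ⟨hp.nat_prime⟩
  have : CharP F p := charP_of_card_eq_prime_pow (f := n * k) (by rw [hF, pow_mul])
  exact ⟨iterateFrobenius F p n, fun x => iterateFrobenius_def p n x⟩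

theorem exists_pow_ne_self {F : Type*} [Field F] [Fintype F] {q : ℕ} (hq : 1 < q)
    (hcard : q < Fintype.card F) : ∃ z : F, z ^ q ≠ z := by
  by_contra! h
  have hroots : (Finset.univ : Finset F).val ⊆ (X ^ q - X : F[X]).roots := fun z _ => by
    rw [mem_roots (FiniteField.X_pow_card_sub_X_ne_zero F hq)]
    simp [h z]
  have := card_le_degree_of_subset_roots hroots
  rw [Finset.card_univ, FiniteField.X_pow_card_sub_X_natDegree_eq F hq] at this
  omega

theorem succ_dvd_sq_sub_one_div {q d : ℕ} (hd : d ∣ q - 1) : q + 1 ∣ (q ^ 2 - 1) / d := by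
  rw [← one_pow 2, Nat.sq_sub_sq, one_pow, mul_comm, ← Nat.div_mul_right_comm hd]
  exact dvd_mul_left _ _

theorem Polynomial.map_eval_of_map_coeff {R : Type*} [CommSemiring R] {σ : R →+* R} {φ : R[X]}
    (hφ : ∀ i, σ (φ.coeff i) = φ.coeff i) (t : R) : σ (φ.eval t) = φ.eval (σ t) := by
  rw [← eval_map_apply, show φ.map σ = φ from ext fun i => by rw [coeff_map, hφ]]

section AntiFixed

variable {F : Type*} [Field F] {σ : F →+* F} {y : F}

theorem map_pow_of_map_eq_neg_of_even (hy : σ y = -y) {r : ℕ} (hr : Even r) :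
    σ (y ^ r) = y ^ r := by
  rw [map_pow, hy, hr.neg_pow]

theorem map_pow_of_map_eq_neg_of_succ_dvd {q : ℕ} (hσ : ∀ x, σ x = x ^ q) (hy : σ y = -y)
    {M : ℕ} (hM : q + 1 ∣ M) : σ (y ^ M) = y ^ M := by
  obtain ⟨k, rfl⟩ := hM
  have hsucc : y ^ (q + 1) = -y ^ 2 := by rw [pow_succ, ← hσ, hy]; ring
  rw [pow_mul, map_pow, hsucc, map_neg, map_pow, hy, neg_sq]

end AntiFixed

theorem stmt_19_general {F : Type*} [Field F] [Fintype F]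
    (q : ℕ) (hq : IsPrimePow q) (hF : Fintype.card F = q ^ 2)
    (d : ℕ) (hdvd : d ∣ q - 1)
    (r : ℕ) (hre : Even r)
    (φ : Polynomial F) (hφ : ∀ i : ℕ, (φ.coeff i) ^ q = φ.coeff i)
    (u e c : F) (hu : u ^ q = u) (he : e ^ q = e) (hc : c + c ^ q = 0)
    (f : F → F)
    (hf : f = fun x => (x ^ q - x + c) ^ r *
      φ.eval ((x ^ q - x + c) ^ ((q ^ 2 - 1) / d)) + u * x ^ q + (u + e) * x) :
    Function.Bijective f ↔ e * (2 * u + e) ≠ 0 := by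
  obtain ⟨σ, hσ⟩ := exists_ringHom_eq_pow_of_card_eq_pow hq hF
  have hinv : Function.Involutive σ := fun x => by
    rw [hσ, hσ, ← pow_mul, ← sq, ← hF, FiniteField.pow_card]
  have hσ_ne : ∃ z, σ z ≠ z := by
    simp only [hσ]
    exact exists_pow_ne_self hq.one_lt (hF ▸ lt_self_pow₀ hq.one_lt one_lt_two)
  simp only [← hσ] at hf hu he hc hφ
  have hψ : ∀ t, σ (σ t - t + c) = -(σ t - t + c) := fun t => by
    rw [map_add, map_sub, hinv t]
    linear_combination hc
  subst hf
  refine bijective_add_mul_add_mul_iff (g := fun t => (t + c) ^ r * φ.eval ((t + c) ^ _))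
    hinv hσ_ne (fun x => ?_) hu he
  rw [map_mul, map_pow_of_map_eq_neg_of_even (hψ x) hre, Polynomial.map_eval_of_map_coeff hφ,
    map_pow_of_map_eq_neg_of_succ_dvd hσ (hψ x) (succ_dvd_sq_sub_one_div hdvd)]

theorem stmt_19 {F : Type*} [Field F] [Fintype F]
    (q : ℕ) (hq : IsPrimePow q) (hF : Fintype.card F = q ^ 2)
    (d : ℕ) (hd0 : 0 < d) (hdvd : d ∣ q - 1)
    (r : ℕ) (hr : 0 < r) (hre : Even r)
    (φ : Polynomial F) (hφ : ∀ i : ℕ, (φ.coeff i) ^ q = φ.coeff i)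
    (u e c : F) (hu : u ^ q = u) (he : e ^ q = e) (hc : c + c ^ q = 0)
    (f : F → F)
    (hf : f = fun x => (x ^ q - x + c) ^ r *
      φ.eval ((x ^ q - x + c) ^ ((q ^ 2 - 1) / d)) + u * x ^ q + (u + e) * x) :
    Function.Bijective f ↔ e * (2 * u + e) ≠ 0 :=
  stmt_19_general q hq hF d hdvd r hre φ hφ u e c hu he hc f hf
end
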